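/- arXiv:1005.4435 — 8 statements merged into one kernel-verified Lean document; each statement's English description precedes it below -/
import Mathlib

section
/- If G is PTFA, then for all n the quotient A/Γ_r^(n)(γ_A) is PTFA. -/
/-- The set of commutators of elements of `S`. -/
def commSet {A : Type*} [Group A] (S : Set A) : Set A :=
  {z | ∃ a ∈ S, ∃ b ∈ S, z = a * b * a⁻¹ * b⁻¹}

/-- The rational `G`-derived series of a homomorphism `γ : A →* G`. -/
def ratDer {A G : Type*} [Group A] [Group G] (γ : A →* G) : ℕ → Set A
  | 0 => (γ.ker : Set A)
  | n + 1 => {x | x ∈ ratDer γ n ∧ ∃ m : ℤ, m ≠ 0 ∧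
      x ^ m ∈ Subgroup.closure (commSet (ratDer γ n))}

section Aux

variable {A G : Type*} [Group A] [Group G]

/-- Roots of the commutator subgroup inside `H` are closed under multiplication. -/
lemma aux_mul {H : Subgroup A} {x y : A} (hx : x ∈ H) (hy : y ∈ H)
    {m l : ℤ} (hxm : x ^ m ∈ ⁅H, H⁆) (hyl : y ^ l ∈ ⁅H, H⁆) :
    (x * y) ^ (m * l) ∈ ⁅H, H⁆ := by
  have hmap : ⁅H, H⁆ = Subgroup.map H.subtype ⁅(⊤ : Subgroup H), ⊤⁆ := by
    rw [Subgroup.map_commutator, ← MonoidHom.range_eq_map, Subgroup.range_subtype]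
  have key : ∀ (z : H) (k : ℤ), (z : A) ^ k ∈ ⁅H, H⁆ ↔
      Abelianization.of z ^ k = 1 := by
    intro z k
    rw [hmap]
    have h1 : (z : A) ^ k = H.subtype (z ^ k) := by simp
    rw [h1, Subgroup.mem_map_iff_mem (Subgroup.subtype_injective H)]
    rw [← map_zpow]
    exact (QuotientGroup.eq_one_iff _).symm
  have hxm' := (key ⟨x, hx⟩ m).mp hxm
  have hyl' := (key ⟨y, hy⟩ l).mp hyl
  have hshow : x * y = (((⟨x, hx⟩ : H) * ⟨y, hy⟩ : H) : A) := rfl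
  have h1 : Abelianization.of (⟨x, hx⟩ : H) ^ (m * l) = 1 := by
    rw [zpow_mul, hxm', one_zpow]
  have h2 : Abelianization.of (⟨y, hy⟩ : H) ^ (m * l) = 1 := by
    rw [mul_comm m l, zpow_mul, hyl', one_zpow]
  rw [hshow, key ((⟨x, hx⟩ : H) * ⟨y, hy⟩) (m * l), map_mul, mul_zpow,
    h1, h2, one_mul]

/-- The rational derived series as subgroups. -/
def ratSub (γ : A →* G) : ℕ → Subgroup A
  | 0 => γ.ker
  | n + 1 =>
    { carrier := {x | x ∈ ratSub γ n ∧ ∃ m : ℤ, m ≠ 0 ∧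
        x ^ m ∈ ⁅ratSub γ n, ratSub γ n⁆},
      one_mem' := ⟨(ratSub γ n).one_mem, 1, one_ne_zero, by
        simp [Subgroup.one_mem]⟩,
      mul_mem' := by
        rintro x y ⟨hx, m, hm, hxm⟩ ⟨hy, l, hl, hyl⟩
        exact ⟨(ratSub γ n).mul_mem hx hy, m * l, mul_ne_zero hm hl,
          aux_mul hx hy hxm hyl⟩,
      inv_mem' := by
        rintro x ⟨hx, m, hm, hxm⟩
        exact ⟨(ratSub γ n).inv_mem hx, m, hm, by
          rw [inv_zpow]
          exact inv_mem hxm⟩ }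

variable (γ : A →* G)

lemma ratSub_normal : ∀ n, (ratSub γ n).Normal
  | 0 => MonoidHom.normal_ker γ
  | n + 1 => by
    haveI := ratSub_normal n
    constructor
    rintro x ⟨hx, m, hm, hxm⟩ g
    refine ⟨(ratSub_normal n).conj_mem x hx g, m, hm, ?_⟩
    have : (g * x * g⁻¹) ^ m = g * x ^ m * g⁻¹ := by
      rw [← MulAut.conj_apply, ← map_zpow, MulAut.conj_apply]
    rw [this]
    exact (Subgroup.commutator_normal _ _).conj_mem _ hxm g

lemma ratSub_coe (n : ℕ) : (ratSub γ n : Set A) = ratDer γ n := by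
  induction n with
  | zero => rfl
  | succ n ih =>
    have hc : Subgroup.closure (commSet (ratDer γ n)) =
        ⁅ratSub γ n, ratSub γ n⁆ := by
      rw [Subgroup.commutator_def]
      congr 1
      ext z
      simp only [commSet, Set.mem_setOf_eq, ← ih, SetLike.mem_coe]
      constructor
      · rintro ⟨a, ha, b, hb, rfl⟩
        exact ⟨a, ha, b, hb, (commutatorElement_def a b).symm⟩
      · rintro ⟨a, ha, b, hb, rfl⟩
        exact ⟨a, ha, b, hb, commutatorElement_def a b⟩
    have hmem : ∀ y : A, y ∈ ratDer γ n ↔ y ∈ ratSub γ n := by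
      intro y; rw [← ih]; rfl
    ext x
    show (x ∈ ratSub γ n ∧ ∃ m : ℤ, m ≠ 0 ∧ x ^ m ∈ ⁅ratSub γ n, ratSub γ n⁆) ↔ _
    simp only [ratDer, Set.mem_setOf_eq, hc, hmem]

lemma ratSub_succ_le (n : ℕ) : ratSub γ (n + 1) ≤ ratSub γ n := fun _ hx => hx.1

lemma ratSub_le (a b : ℕ) (h : a ≤ b) : ratSub γ b ≤ ratSub γ a :=
  antitone_nat_of_succ_le (ratSub_succ_le γ) h

lemma ratSub_le_ker : ∀ n, ratSub γ n ≤ γ.ker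
  | 0 => le_rfl
  | n + 1 => (ratSub_succ_le γ n).trans (ratSub_le_ker n)

end Aux

/-- A group `G` is poly-torsion-free-abelian (PTFA) if it admits a finite normal series
with torsion-free abelian successive quotients. -/
def IsPTFA (G : Type*) [Group G] : Prop :=
  ∃ (n : ℕ) (s : ℕ → Subgroup G),
    s 0 = ⊤ ∧ s n = ⊥ ∧
    (∀ i, s (i + 1) ≤ s i) ∧
    (∀ i, ∀ k ∈ s i, ∀ h ∈ s (i + 1), k * h * k⁻¹ ∈ s (i + 1)) ∧
    (∀ i, ∀ x ∈ s i, ∀ y ∈ s i, x * y * x⁻¹ * y⁻¹ ∈ s (i + 1)) ∧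
    (∀ i, ∀ x ∈ s i, ∀ m : ℤ, m ≠ 0 → x ^ m ∈ s (i + 1) → x ∈ s (i + 1))

/-- if `G` is PTFA and `γ : A →* G` is surjective, then for every `n` the
quotient `A/Γ_r^(n)(γ)` is PTFA (here `N` is the `n`-th rational `G`-derived subgroup,
which is a normal subgroup of `A`). -/
theorem isPTFA_quotient_ratDer {A G : Type*} [Group A] [Group G]
    (γ : A →* G) (hγ : Function.Surjective γ) (hG : IsPTFA G) (n : ℕ)
    (N : Subgroup A) [N.Normal] (hN : (N : Set A) = ratDer γ n) :
    IsPTFA (A ⧸ N) := by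
  obtain ⟨m, sG, h0, hm, hle, hconj, hcomm, hroot⟩ := hG
  set π := QuotientGroup.mk' N with hπ
  have hπs : Function.Surjective π := QuotientGroup.mk'_surjective N
  have hNr : N = ratSub γ n := SetLike.ext' (hN.trans (ratSub_coe γ n).symm)
  have hNker : N ≤ π.ker := by rw [QuotientGroup.ker_mk']
  set t : ℕ → Subgroup (A ⧸ N) := fun i =>
    if i ≤ m then Subgroup.map π (Subgroup.comap γ (sG i))
    else Subgroup.map π (ratSub γ (i - m)) with ht
  have htG : ∀ i, i ≤ m → t i = Subgroup.map π (Subgroup.comap γ (sG i)) :=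
    fun i hi => if_pos hi
  have htm : ∀ i, m ≤ i → t i = Subgroup.map π (ratSub γ (i - m)) := by
    intro i hi
    rcases eq_or_lt_of_le hi with h | h
    · rw [← h, htG m le_rfl, Nat.sub_self, hm, MonoidHom.comap_bot]
      rfl
    · exact if_neg (not_le.mpr h)
  refine ⟨m + n, t, ?_, ?_, ?_, ?_, ?_, ?_⟩
  · rw [htG 0 (Nat.zero_le m), h0, Subgroup.comap_top,
      Subgroup.map_top_of_surjective π hπs]
  · rw [htm (m + n) (Nat.le_add_right m n), Nat.add_sub_cancel_left,
      Subgroup.map_eq_bot_iff, ← hNr]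
    exact hNker
  · intro i
    by_cases hi : i + 1 ≤ m
    · rw [htG (i + 1) hi, htG i (Nat.le_of_succ_le hi)]
      exact Subgroup.map_mono (Subgroup.comap_mono (hle i))
    · push_neg at hi
      have hi' : m ≤ i := Nat.lt_succ_iff.mp hi
      rw [htm (i + 1) (le_of_lt hi), htm i hi', Nat.succ_sub hi']
      exact Subgroup.map_mono (ratSub_succ_le γ (i - m))
  · intro i k hk h hh
    by_cases hi : i + 1 ≤ m
    · rw [htG i (Nat.le_of_succ_le hi)] at hk
      rw [htG (i + 1) hi] at hh ⊢
      obtain ⟨a, ha, rfl⟩ := hk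
      obtain ⟨b, hb, rfl⟩ := hh
      refine ⟨a * b * a⁻¹, ?_, by simp [map_mul]⟩
      simp only [SetLike.mem_coe, Subgroup.mem_comap, map_mul, map_inv] at ha hb ⊢
      exact hconj i _ ha _ hb
    · push_neg at hi
      rw [htm (i + 1) (le_of_lt hi)] at hh ⊢
      haveI := ratSub_normal γ ((i + 1) - m)
      exact ((ratSub_normal γ ((i + 1) - m)).map π hπs).conj_mem h hh k
  · intro i x hx y hy
    by_cases hi : i + 1 ≤ m
    · rw [htG i (Nat.le_of_succ_le hi)] at hx hy
      rw [htG (i + 1) hi]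
      obtain ⟨a, ha, rfl⟩ := hx
      obtain ⟨b, hb, rfl⟩ := hy
      refine ⟨a * b * a⁻¹ * b⁻¹, ?_, by simp [map_mul]⟩
      simp only [SetLike.mem_coe, Subgroup.mem_comap, map_mul, map_inv] at ha hb ⊢
      exact hcomm i _ ha _ hb
    · push_neg at hi
      have hi' : m ≤ i := Nat.lt_succ_iff.mp hi
      rw [htm i hi'] at hx hy
      rw [htm (i + 1) (le_of_lt hi), Nat.succ_sub hi']
      obtain ⟨a, ha, rfl⟩ := hx
      obtain ⟨b, hb, rfl⟩ := hy
      refine ⟨a * b * a⁻¹ * b⁻¹, ?_, by simp [map_mul]⟩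
      refine ⟨mul_mem (mul_mem (mul_mem ha hb) (inv_mem ha)) (inv_mem hb),
        1, one_ne_zero, ?_⟩
      rw [zpow_one, ← commutatorElement_def]
      exact Subgroup.commutator_mem_commutator ha hb
  · intro i x hx mm hmm hxm
    by_cases hi : i + 1 ≤ m
    · rw [htG i (Nat.le_of_succ_le hi)] at hx
      rw [htG (i + 1) hi] at hxm ⊢
      obtain ⟨a, ha, rfl⟩ := hx
      obtain ⟨b, hb, hbe⟩ := hxm
      have hNb : a ^ mm * b⁻¹ ∈ N := by
        have : π (a ^ mm * b⁻¹) = 1 := by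
          rw [map_mul, map_inv, map_zpow, hbe, mul_inv_cancel]
        rwa [hπ, QuotientGroup.mk'_apply, QuotientGroup.eq_one_iff] at this
      have hγb : γ a ^ mm = γ b := by
        have hker : N ≤ γ.ker := by rw [hNr]; exact ratSub_le_ker γ n
        have h1 : γ (a ^ mm * b⁻¹) = 1 := hker hNb
        rw [map_mul, map_inv, map_zpow] at h1
        exact eq_of_mul_inv_eq_one h1
      simp only [SetLike.mem_coe, Subgroup.mem_comap] at ha hb
      have : γ a ∈ sG (i + 1) := hroot i (γ a) ha mm hmm (hγb ▸ hb)
      exact ⟨a, Subgroup.mem_comap.mpr this, rfl⟩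
    · push_neg at hi
      have hi' : m ≤ i := Nat.lt_succ_iff.mp hi
      by_cases hin : i + 1 ≤ m + n
      · -- j + 1 ≤ n where j = i - m
        have hj : i - m + 1 ≤ n := by omega
        rw [htm i hi'] at hx
        rw [htm (i + 1) (le_of_lt hi), Nat.succ_sub hi'] at hxm ⊢
        obtain ⟨a, ha, rfl⟩ := hx
        obtain ⟨b, hb, hbe⟩ := hxm
        have hNb : a ^ mm * b⁻¹ ∈ N := by
          have : π (a ^ mm * b⁻¹) = 1 := by
            rw [map_mul, map_inv, map_zpow, hbe, mul_inv_cancel]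
          rwa [hπ, QuotientGroup.mk'_apply, QuotientGroup.eq_one_iff] at this
        have hamm : a ^ mm ∈ ratSub γ (i - m + 1) := by
          have h1 : a ^ mm * b⁻¹ ∈ ratSub γ (i - m + 1) :=
            ratSub_le γ _ _ hj (hNr ▸ hNb)
          have := mul_mem h1 hb
          rwa [inv_mul_cancel_right] at this
        obtain ⟨-, k, hk, hak⟩ := hamm
        refine ⟨a, ⟨ha, mm * k, mul_ne_zero hmm hk, ?_⟩, rfl⟩
        rw [zpow_mul]
        exact hak
      · -- t i = ⊥
        push_neg at hin
        have : t i = ⊥ := by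
          rw [htm i hi', Subgroup.map_eq_bot_iff]
          refine le_trans (ratSub_le γ n (i - m) (by omega)) ?_
          rw [← hNr]; exact hNker
        rw [this, Subgroup.mem_bot] at hx
        rw [hx]
        exact (t (i + 1)).one_mem
end

section
/- If F is the free group on two generators and F_2 = [F,F] its commutator subgroup, then for the epimorphism γ : F × ℤ → F/F_3 defined via the embedding ι : F_2 → F × ℤ, ι(w) = w·t^{-1} for w ∈ F_2 (t a generator of ℤ), the kernel ker(γ) is isomorphic to F_2, a free group of infinite rank. -/
open scoped commutatorElement

structure Heis where
  a : ℤ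
  b : ℤ
  c : ℤ

namespace Heis

@[ext] lemma ext' {x y : Heis} (h1 : x.a = y.a) (h2 : x.b = y.b) (h3 : x.c = y.c) : x = y := by
  cases x; cases y; simp_all

instance : One Heis := ⟨⟨0,0,0⟩⟩
instance : Mul Heis := ⟨fun x y => ⟨x.a + y.a, x.b + y.b, x.c + y.c + x.a * y.b⟩⟩
instance : Inv Heis := ⟨fun x => ⟨-x.a, -x.b, -x.c + x.a * x.b⟩⟩

@[simp] lemma mul_a (x y : Heis) : (x * y).a = x.a + y.a := rfl
@[simp] lemma mul_b (x y : Heis) : (x * y).b = x.b + y.b := rfl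
@[simp] lemma mul_c (x y : Heis) : (x * y).c = x.c + y.c + x.a * y.b := rfl
@[simp] lemma inv_a (x : Heis) : (x⁻¹).a = -x.a := rfl
@[simp] lemma inv_b (x : Heis) : (x⁻¹).b = -x.b := rfl
@[simp] lemma inv_c (x : Heis) : (x⁻¹).c = -x.c + x.a * x.b := rfl
@[simp] lemma one_a : (1 : Heis).a = 0 := rfl
@[simp] lemma one_b : (1 : Heis).b = 0 := rfl
@[simp] lemma one_c : (1 : Heis).c = 0 := rfl

instance : Group Heis :=
  Group.ofLeftAxioms
    (fun x y z => by ext <;> simp <;> ring)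
    (fun x => by ext <;> simp)
    (fun x => by ext <;> simp [mul_comm])

lemma zpow_z (m : ℤ) : (⟨0,0,1⟩ : Heis) ^ m = ⟨0,0,m⟩ := by
  induction m using Int.induction_on with
  | zero => rfl
  | succ n ih => rw [zpow_add_one, ih]; ext <;> simp
  | pred n ih => rw [zpow_sub_one, ih]; ext <;> simp <;> ring

end Heis

structure Wr where
  f : ℤ → ℤ
  a : ℤ

namespace Wr

@[ext] lemma ext' {x y : Wr} (h1 : x.f = y.f) (h2 : x.a = y.a) : x = y := by
  cases x; cases y; simp_all

instance : One Wr := ⟨⟨fun _ => 0, 0⟩⟩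
instance : Mul Wr := ⟨fun x y => ⟨fun i => x.f i + y.f (i - x.a), x.a + y.a⟩⟩
instance : Inv Wr := ⟨fun x => ⟨fun i => -x.f (i + x.a), -x.a⟩⟩

@[simp] lemma mul_f (x y : Wr) (i : ℤ) : (x * y).f i = x.f i + y.f (i - x.a) := rfl
@[simp] lemma mul_a (x y : Wr) : (x * y).a = x.a + y.a := rfl
@[simp] lemma inv_f (x : Wr) (i : ℤ) : (x⁻¹).f i = -x.f (i + x.a) := rfl
@[simp] lemma inv_a (x : Wr) : (x⁻¹).a = -x.a := rfl
@[simp] lemma one_f (i : ℤ) : (1 : Wr).f i = 0 := rfl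
@[simp] lemma one_a : (1 : Wr).a = 0 := rfl

instance : Group Wr :=
  Group.ofLeftAxioms
    (fun x y z => by ext i <;> simp <;> ring_nf)
    (fun x => by ext i <;> simp)
    (fun x => by ext i <;> simp)

lemma zpow_shift (m : ℤ) : (⟨fun _ => 0, 1⟩ : Wr) ^ m = ⟨fun _ => 0, m⟩ := by
  induction m using Int.induction_on with
  | zero => rfl
  | succ n ih => rw [zpow_add_one, ih]; ext i <;> simp
  | pred n ih => rw [zpow_sub_one, ih]; ext i <;> simp <;> ring

/-- second coordinate hom -/
def snd : Wr →* Multiplicative ℤ :=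
  { toFun := fun x => Multiplicative.ofAdd x.a
    map_one' := rfl
    map_mul' := fun x y => rfl }

end Wr

section Central
variable {G : Type*} [Group G] (hcent : ∀ a b z : G, Commute ⁅a, b⁆ z)
include hcent

lemma comm_mul_left' (g₁ g₂ h : G) : ⁅g₁ * g₂, h⁆ = ⁅g₂, h⁆ * ⁅g₁, h⁆ := by
  have e1 : ⁅g₁ * g₂, h⁆ = g₁ * ⁅g₂, h⁆ * g₁⁻¹ * ⁅g₁, h⁆ := by
    simp only [commutatorElement_def]; group
  rw [e1, ← (hcent g₂ h g₁).eq, mul_inv_cancel_right]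

lemma comm_inv_left' (g h : G) : ⁅g⁻¹, h⁆ = ⁅g, h⁆⁻¹ := by
  have e1 : ⁅g⁻¹, h⁆ = g⁻¹ * ⁅g, h⁆⁻¹ * g := by
    simp only [commutatorElement_def]; group
  rw [e1, ← ((hcent g h g⁻¹).inv_left).eq, inv_mul_cancel_right]

lemma comm_mul_right' (g h₁ h₂ : G) : ⁅g, h₁ * h₂⁆ = ⁅g, h₂⁆ * ⁅g, h₁⁆ := by
  rw [← commutatorElement_inv, comm_mul_left' hcent, ← commutatorElement_inv g h₁,
    ← commutatorElement_inv g h₂, mul_inv_rev, inv_inv, inv_inv]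
  exact (hcent g h₁ _).eq

lemma comm_inv_right' (g h : G) : ⁅g, h⁻¹⁆ = ⁅g, h⁆⁻¹ := by
  rw [← commutatorElement_inv, comm_inv_left' hcent, ← commutatorElement_inv g h, inv_inv]

/-- if G is generated by s and commutators are central and pairwise commutators of
generators lie in Z, then all commutators lie in Z -/
lemma comm_mem_of_gen (Z : Subgroup G) (s : Set G) (hs : Subgroup.closure s = ⊤)
    (hbase : ∀ a ∈ s, ∀ b ∈ s, ⁅a, b⁆ ∈ Z) (g h : G) : ⁅g, h⁆ ∈ Z := by
  have hg : g ∈ Subgroup.closure s := hs ▸ Subgroup.mem_top g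
  induction hg using Subgroup.closure_induction with
  | one => simpa using Z.one_mem
  | mul a b _ _ ha hb => rw [comm_mul_left' hcent]; exact Z.mul_mem hb ha
  | inv a _ ha => rw [comm_inv_left' hcent]; exact Z.inv_mem ha
  | mem a ha =>
    have hh : h ∈ Subgroup.closure s := hs ▸ Subgroup.mem_top h
    induction hh using Subgroup.closure_induction with
    | one => simpa using Z.one_mem
    | mul b c _ _ hb hc => rw [comm_mul_right' hcent]; exact Z.mul_mem hc hb
    | inv b _ hb => rw [comm_inv_right' hcent]; exact Z.inv_mem hb
    | mem b hb => exact hbase a ha b hb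

end Central

abbrev F2 : Type := FreeGroup (Fin 2)
def xx : F2 := FreeGroup.of 0
def yy : F2 := FreeGroup.of 1
def cc : F2 := ⁅xx, yy⁆

lemma cc_mem_comm : cc ∈ commutator F2 :=
  Subgroup.commutator_mem_commutator (Subgroup.mem_top _) (Subgroup.mem_top _)

lemma N_le_comm : (⊤ : Subgroup F2).lowerCentralSeries 2 ≤ commutator F2 := by
  have h := lowerCentralSeries_antitone (G := F2) ⊤ (show 1 ≤ 2 by norm_num)
  rwa [lowerCentralSeries_one] at h

/-- the Heisenberg representation -/
def φH : F2 →* Heis := FreeGroup.lift ![⟨1,0,0⟩, ⟨0,1,0⟩]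

/-- first coords zero subgroup of Heis -/
def HZ : Subgroup Heis where
  carrier := {x | x.a = 0 ∧ x.b = 0}
  one_mem' := ⟨rfl, rfl⟩
  mul_mem' := by rintro x y ⟨h1, h2⟩ ⟨h3, h4⟩; constructor <;> simp_all
  inv_mem' := by rintro x ⟨h1, h2⟩; constructor <;> simp_all

lemma HZ_central {z : Heis} (hz : z ∈ HZ) (q : Heis) : ⁅z, q⁆ = 1 := by
  obtain ⟨h1, h2⟩ := hz
  ext <;> simp [commutatorElement_def, h1, h2] <;> ring

lemma comm_Heis_le_HZ : commutator Heis ≤ HZ := by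
  rw [commutator_def, Subgroup.commutator_le]
  intro g _ h _
  constructor <;> simp [commutatorElement_def] <;> ring

lemma lcs2_Heis : (⊤ : Subgroup Heis).lowerCentralSeries 2 = ⊥ := by
  rw [eq_bot_iff, lowerCentralSeries_succ, Subgroup.commutator_def, Subgroup.closure_le]
  rintro w ⟨p, hp, q, -, rfl⟩
  have hp' : p ∈ commutator Heis := by rwa [← lowerCentralSeries_one]
  have := HZ_central (comm_Heis_le_HZ hp') q
  simp only [commutatorElement_def] at this
  simp [commutatorElement_def, this]

lemma N_le_ker_φH : (⊤ : Subgroup F2).lowerCentralSeries 2 ≤ φH.ker := by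
  intro g hg
  have h1 : φH g ∈ (⊤ : Subgroup Heis).lowerCentralSeries 2 :=
    Subgroup.lowerCentralSeries.map φH 2 (Subgroup.mem_map_of_mem φH hg)
  rw [lcs2_Heis] at h1
  exact h1

lemma φH_x : φH xx = ⟨1,0,0⟩ := by simp [φH, xx]
lemma φH_y : φH yy = ⟨0,1,0⟩ := by simp [φH, yy]

lemma φH_cc : φH cc = ⟨0,0,1⟩ := by
  rw [cc, map_commutatorElement, φH_x, φH_y]
  ext <;> simp [commutatorElement_def]

lemma cc_zpow_mem_N {m : ℤ} (h : cc ^ m ∈ (⊤ : Subgroup F2).lowerCentralSeries 2) : m = 0 := by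
  have h1 : φH (cc ^ m) = 1 := N_le_ker_φH h
  rw [map_zpow, φH_cc, Heis.zpow_z] at h1
  exact congrArg Heis.c h1

abbrev Q2 : Type := F2 ⧸ (⊤ : Subgroup F2).lowerCentralSeries 2
def mkQ : F2 →* Q2 := QuotientGroup.mk' _

lemma Qcent (a b z : Q2) : Commute ⁅a, b⁆ z := by
  obtain ⟨a', rfl⟩ := QuotientGroup.mk'_surjective _ a
  obtain ⟨b', rfl⟩ := QuotientGroup.mk'_surjective _ b
  obtain ⟨z', rfl⟩ := QuotientGroup.mk'_surjective _ z
  rw [← commutatorElement_eq_one_iff_commute]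
  have h1 : ⁅a', b'⁆ ∈ (⊤ : Subgroup F2).lowerCentralSeries 1 := by
    rw [lowerCentralSeries_one]
    exact Subgroup.commutator_mem_commutator (Subgroup.mem_top _) (Subgroup.mem_top _)
  have h2 : ⁅⁅a', b'⁆, z'⁆ ∈ (⊤ : Subgroup F2).lowerCentralSeries 2 := by
    rw [mem_lowerCentralSeries_succ_iff]
    exact Subgroup.subset_closure ⟨⁅a', b'⁆, h1, z', Subgroup.mem_top _, rfl⟩
  have h3 : (QuotientGroup.mk' ((⊤ : Subgroup F2).lowerCentralSeries 2)) ⁅⁅a', b'⁆, z'⁆ = 1 := by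
    rw [← MonoidHom.mem_ker, QuotientGroup.ker_mk']
    exact h2
  rw [map_commutatorElement, map_commutatorElement] at h3
  exact h3

lemma Qgen : Subgroup.closure {mkQ xx, mkQ yy} = ⊤ := by
  have hF : Subgroup.closure (Set.range (FreeGroup.of : Fin 2 → F2)) = ⊤ :=
    FreeGroup.closure_range_of (Fin 2)
  have hr : Set.range (FreeGroup.of : Fin 2 → F2) = {xx, yy} := by
    ext z
    constructor
    · rintro ⟨i, rfl⟩; fin_cases i
      · exact Or.inl rfl
      · exact Or.inr rfl
    · rintro (rfl | rfl)
      · exact ⟨0, rfl⟩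
      · exact ⟨1, rfl⟩
  rw [hr] at hF
  calc Subgroup.closure {mkQ xx, mkQ yy}
      = Subgroup.closure (mkQ '' {xx, yy}) := by rw [Set.image_insert_eq, Set.image_singleton]
    _ = Subgroup.map mkQ (Subgroup.closure {xx, yy}) := (MonoidHom.map_closure _ _).symm
    _ = Subgroup.map mkQ ⊤ := by rw [hF]
    _ = ⊤ := Subgroup.map_top_of_surjective _ (QuotientGroup.mk'_surjective _)

lemma commQ_le_zpowers (g h : Q2) : ⁅g, h⁆ ∈ Subgroup.zpowers (mkQ cc) := by
  apply comm_mem_of_gen Qcent _ _ Qgen _ g h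
  have hc : ⁅mkQ xx, mkQ yy⁆ = mkQ cc := by rw [cc, map_commutatorElement]
  rintro a (rfl | rfl) b (rfl | rfl)
  · rw [commutatorElement_self]; exact Subgroup.one_mem _
  · rw [hc]; exact Subgroup.mem_zpowers _
  · rw [← commutatorElement_inv, hc]; exact Subgroup.inv_mem _ (Subgroup.mem_zpowers _)
  · rw [commutatorElement_self]; exact Subgroup.one_mem _

lemma mkQ_ker : mkQ.ker = (⊤ : Subgroup F2).lowerCentralSeries 2 := QuotientGroup.ker_mk' _

lemma mkQ_eq_one_iff {w : F2} : mkQ w = 1 ↔ w ∈ (⊤ : Subgroup F2).lowerCentralSeries 2 := by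
  constructor
  · intro h
    have h2 : w ∈ mkQ.ker := h
    rwa [mkQ_ker] at h2
  · intro h
    have h2 : w ∈ mkQ.ker := by rw [mkQ_ker]; exact h
    exact h2

lemma ker_equiv_comm (γ : F2 × Multiplicative ℤ →* Q2)
    (hγ : ∀ (w : F2) (k : ℤ), γ (w, Multiplicative.ofAdd k) = mkQ w * (mkQ cc) ^ k) :
    Nonempty (γ.ker ≃* commutator F2) := by
  have hker : ∀ (w : F2) (m : Multiplicative ℤ),
      (w, m) ∈ γ.ker ↔ w * cc ^ m.toAdd ∈ (⊤ : Subgroup F2).lowerCentralSeries 2 := by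
    intro w m
    rw [MonoidHom.mem_ker, ← ofAdd_toAdd m, hγ, ← map_zpow, ← map_mul,
      mkQ_eq_one_iff, toAdd_ofAdd]
  have hmem1 : ∀ (w : F2) (m : Multiplicative ℤ), (w, m) ∈ γ.ker → w ∈ commutator F2 := by
    intro w m h
    have h2 := (hker w m).mp h
    have h3 : w = (w * cc ^ m.toAdd) * (cc ^ m.toAdd)⁻¹ := by group
    rw [h3]
    exact Subgroup.mul_mem _ (N_le_comm h2)
      (Subgroup.inv_mem _ (Subgroup.zpow_mem _ cc_mem_comm _))
  let ψK : γ.ker →* ↥(commutator F2) :=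
    { toFun := fun p => ⟨p.1.1, hmem1 p.1.1 p.1.2 p.2⟩
      map_one' := rfl
      map_mul' := fun _ _ => rfl }
  have hinj : Function.Injective ψK := by
    intro u v h
    have h1 : u.1.1 = v.1.1 := congrArg Subtype.val h
    have hu := (hker u.1.1 u.1.2).mp u.2
    have hv := (hker v.1.1 v.1.2).mp v.2
    rw [h1] at hu
    have e : (v.1.1 * cc ^ v.1.2.toAdd)⁻¹ * (v.1.1 * cc ^ u.1.2.toAdd) =
        cc ^ (u.1.2.toAdd - v.1.2.toAdd) := by
      rw [zpow_sub]; group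
    have hm : cc ^ (u.1.2.toAdd - v.1.2.toAdd) ∈ (⊤ : Subgroup F2).lowerCentralSeries 2 := by
      rw [← e]; exact Subgroup.mul_mem _ (Subgroup.inv_mem _ hv) hu
    have h0 := cc_zpow_mem_N hm
    have h2 : u.1.2.toAdd = v.1.2.toAdd := by omega
    have h3 : u.1.2 = v.1.2 := Multiplicative.toAdd.injective h2
    apply Subtype.ext
    exact Prod.ext h1 h3
  have hsurj : Function.Surjective ψK := by
    rintro ⟨w, hw⟩
    have h1 : mkQ w ∈ Subgroup.zpowers (mkQ cc) := by
      have h2 : mkQ w ∈ Subgroup.map mkQ (commutator F2) := Subgroup.mem_map_of_mem _ hw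
      rw [commutator_def, Subgroup.map_commutator] at h2
      have h4 : ⁅Subgroup.map mkQ ⊤, Subgroup.map mkQ ⊤⁆ ≤ Subgroup.zpowers (mkQ cc) :=
        le_trans (Subgroup.commutator_mono le_top le_top)
          (Subgroup.commutator_le.mpr fun g _ h _ => commQ_le_zpowers g h)
      exact h4 h2
    rw [Subgroup.mem_zpowers_iff] at h1
    obtain ⟨n, hn⟩ := h1
    have hker2 : (w, Multiplicative.ofAdd (-n)) ∈ γ.ker := by
      rw [MonoidHom.mem_ker, hγ, ← hn, ← zpow_add]
      simp
    exact ⟨⟨(w, Multiplicative.ofAdd (-n)), hker2⟩, Subtype.ext rfl⟩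
  exact ⟨MulEquiv.ofBijective ψK ⟨hinj, hsurj⟩⟩

/-- the wreath-like representation -/
def ψW : F2 →* Wr := FreeGroup.lift ![⟨fun _ => 0, 1⟩, ⟨fun i => if i = 0 then 1 else 0, 0⟩]

lemma ψW_x : ψW xx = ⟨fun _ => 0, 1⟩ := by simp [ψW, xx]
lemma ψW_y : ψW yy = ⟨fun i => if i = 0 then 1 else 0, 0⟩ := by simp [ψW, yy]

lemma Wr.support_mul (x y : Wr) : Function.support (x * y).f ⊆
    Function.support x.f ∪ (fun i => i + x.a) '' Function.support y.f := by
  intro i hi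
  rw [Function.mem_support] at hi
  by_cases h : x.f i = 0
  · right
    refine ⟨i - x.a, ?_, by ring⟩
    rw [Function.mem_support]
    intro h2
    apply hi
    rw [Wr.mul_f, h, h2, add_zero]
  · exact Or.inl h

lemma Wr.support_inv (x : Wr) : Function.support (x⁻¹).f ⊆
    (fun i => i - x.a) '' Function.support x.f := by
  intro i hi
  rw [Function.mem_support] at hi
  refine ⟨i + x.a, ?_, by ring⟩
  rw [Function.mem_support]
  intro h2
  apply hi
  rw [Wr.inv_f, h2, neg_zero]

lemma ψW_fin (g : F2) : (Function.support (ψW g).f).Finite := by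
  induction g using FreeGroup.induction_on with
  | C1 =>
    apply Set.Finite.subset Set.finite_empty
    intro i hi
    rw [Function.mem_support, map_one] at hi
    exact hi (Wr.one_f i)
  | of i =>
    fin_cases i
    · apply Set.Finite.subset Set.finite_empty
      intro i hi
      rw [Function.mem_support] at hi
      apply hi
      show (ψW xx).f i = 0
      rw [ψW_x]
    · apply Set.Finite.subset (Set.finite_singleton 0)
      intro i hi
      rw [Function.mem_support] at hi
      have hi' : (ψW yy).f i ≠ 0 := hi
      rw [ψW_y] at hi'
      simp only [Set.mem_singleton_iff]
      by_contra h
      exact hi' (if_neg h)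
  | inv_of i ih =>
    rw [map_inv]
    exact (ih.image _).subset (Wr.support_inv _)
  | mul u v hu hv =>
    rw [map_mul]
    exact (hu.union (hv.image _)).subset (Wr.support_mul _ _)

lemma ψW_a_eq_zero {w : F2} (hw : w ∈ commutator F2) : (ψW w).a = 0 := by
  have h := Abelianization.commutator_subset_ker (Wr.snd.comp ψW) hw
  rw [MonoidHom.mem_ker, MonoidHom.comp_apply] at h
  have : Multiplicative.toAdd (Wr.snd (ψW w)) = 0 := by rw [h]; rfl
  exact this

lemma comm_comp_at (i₀ : ℤ) (h0 : i₀ ≠ 0) : (ψW ⁅xx ^ i₀, yy⁆).f i₀ = 1 := by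
  rw [map_commutatorElement, map_zpow, ψW_x, ψW_y, Wr.zpow_shift]
  simp only [commutatorElement_def, Wr.mul_f, Wr.mul_a, Wr.inv_f, Wr.inv_a]
  simp [h0]

noncomputable instance : IsFreeGroup ↥(commutator F2) := inferInstance

lemma gens_infinite : Infinite (IsFreeGroup.Generators ↥(commutator F2)) := by
  by_contra hinf
  have hfinS : Finite (IsFreeGroup.Generators ↥(commutator F2)) := not_infinite_iff_finite.mp hinf
  let e := IsFreeGroup.toFreeGroup ↥(commutator F2)
  let T : Set ↥(commutator F2) := ⇑e.symm '' Set.range FreeGroup.of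
  have hT : Subgroup.closure T = ⊤ := by
    rw [show T = ⇑e.symm.toMonoidHom '' Set.range FreeGroup.of from rfl,
      ← MonoidHom.map_closure, FreeGroup.closure_range_of,
      Subgroup.map_top_of_surjective _ e.symm.surjective]
  have hTfin : T.Finite := (Set.finite_range _).image _
  set D : Set ℤ := ⋃ t ∈ T, Function.support (ψW (t : F2)).f with hDdef
  have hD : D.Finite := hTfin.biUnion fun t _ => ψW_fin t
  have hsup : ∀ v : ↥(commutator F2), Function.support (ψW (v : F2)).f ⊆ D := by
    intro v
    have hv : v ∈ Subgroup.closure T := hT ▸ Subgroup.mem_top v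
    induction hv using Subgroup.closure_induction with
    | mem t ht =>
      rw [hDdef]
      exact Set.subset_biUnion_of_mem (s := T) (u := fun t => Function.support (ψW (t : F2)).f) ht
    | one =>
      intro i hi
      rw [Function.mem_support] at hi
      have h1 : (ψW ((1 : ↥(commutator F2)) : F2)).f i = 0 := by
        rw [show ((1 : ↥(commutator F2)) : F2) = 1 from rfl, map_one]
        exact Wr.one_f i
      exact absurd h1 hi
    | mul u w hu' hw' ihu ihw =>
      intro i hi
      rw [Function.mem_support] at hi
      have hco : ((u * w : ↥(commutator F2)) : F2) = (u : F2) * (w : F2) := rfl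
      rw [hco, map_mul, Wr.mul_f, ψW_a_eq_zero u.2, sub_zero] at hi
      by_cases h1 : (ψW (u : F2)).f i = 0
      · exact ihw (Function.mem_support.mpr (by rwa [h1, zero_add] at hi))
      · exact ihu (Function.mem_support.mpr h1)
    | inv u hu' ihu =>
      intro i hi
      rw [Function.mem_support] at hi
      have hco : ((u⁻¹ : ↥(commutator F2)) : F2) = (u : F2)⁻¹ := rfl
      rw [hco, map_inv, Wr.inv_f, ψW_a_eq_zero u.2, add_zero, neg_ne_zero] at hi
      exact ihu (Function.mem_support.mpr hi)
  obtain ⟨i₀, hi₀⟩ := (hD.union (Set.finite_singleton 0)).infinite_compl.nonempty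
  rw [Set.mem_compl_iff, Set.mem_union] at hi₀
  push_neg at hi₀
  obtain ⟨hiD, hi0⟩ := hi₀
  rw [Set.mem_singleton_iff] at hi0
  have hu : ⁅xx ^ i₀, yy⁆ ∈ commutator F2 :=
    Subgroup.commutator_mem_commutator (Subgroup.mem_top _) (Subgroup.mem_top _)
  exact hiD (hsup ⟨_, hu⟩ (Function.mem_support.mpr
    (by rw [comm_comp_at i₀ hi0]; exact one_ne_zero)))

lemma comm_countable : Countable ↥(commutator F2) := by
  have : Countable F2 := FreeGroup.toWord_injective.countable
  infer_instance

lemma comm_equiv_freeGroupNat : Nonempty (↥(commutator F2) ≃* FreeGroup ℕ) := by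
  have hC := comm_countable
  let e := IsFreeGroup.toFreeGroup ↥(commutator F2)
  have hinj : Function.Injective
      (fun s : IsFreeGroup.Generators ↥(commutator F2) => e.symm (FreeGroup.of s)) :=
    e.symm.injective.comp FreeGroup.of_injective
  have hSc : Countable (IsFreeGroup.Generators ↥(commutator F2)) := hinj.countable
  have hSi := gens_infinite
  obtain ⟨eq⟩ : Nonempty ((IsFreeGroup.Generators ↥(commutator F2)) ≃ ℕ) :=
    nonempty_equiv_of_countable
  exact ⟨e.trans (FreeGroup.freeGroupCongr eq)⟩

/-- let `F` be the free group on two generators `x, y`, `F₂ = [F,F]` its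
commutator subgroup and `F₃ = [F₂,F]` (the third term of the lower central series).
For the epimorphism `γ : F × ℤ → F/F₃` determined by `γ(w, t^k) = w·[x,y]^k mod F₃`
(whose kernel is the image of the embedding `ι : F₂ → F × ℤ`, `ι(w) = w·t^{-1}` in the
sense of the paper), the kernel of `γ` is isomorphic to `F₂`, which is a free group of
(countably) infinite rank. -/
theorem kernel_iso_commutator_freeGroup
    (γ : FreeGroup (Fin 2) × Multiplicative ℤ →*
      FreeGroup (Fin 2) ⧸ (⊤ : Subgroup (FreeGroup (Fin 2))).lowerCentralSeries 2)
    (hγ : ∀ (w : FreeGroup (Fin 2)) (k : ℤ),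
      γ (w, Multiplicative.ofAdd k) =
        (QuotientGroup.mk' ((⊤ : Subgroup (FreeGroup (Fin 2))).lowerCentralSeries 2)) w *
          ((QuotientGroup.mk' ((⊤ : Subgroup (FreeGroup (Fin 2))).lowerCentralSeries 2))
            ⁅FreeGroup.of (0 : Fin 2), FreeGroup.of (1 : Fin 2)⁆) ^ k) :
    Nonempty (γ.ker ≃* commutator (FreeGroup (Fin 2))) ∧
      Nonempty (γ.ker ≃* FreeGroup ℕ) := by
  obtain ⟨e1⟩ := ker_equiv_comm γ hγ
  obtain ⟨e2⟩ := comm_equiv_freeGroupNat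
  exact ⟨⟨e1⟩, ⟨e1.trans e2⟩⟩
end

section
/- If X is algebraically closed over G and N is a Π-perfect subgroup of γ_X, then N is trivial. -/
open Monoid

section
variable {A G : Type*} [Group A] [Group G]

/-- The word group `A ∗ F(x₁,…,xₙ)` used for systems of equations over `γ : A →* G`. -/
abbrev WordGroup (A : Type*) [Group A] (n : ℕ) := Coprod A (FreeGroup (Fin n))

/-- The canonical map `A ∗ F(x₁,…,xₙ) → G ∗ F(x₁,…,xₙ)` induced by `γ` on the first
factor and the identity on the free factor. -/
def coprodMap (γ : A →* G) (n : ℕ) : WordGroup A n →* WordGroup G n :=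
  Coprod.map γ (MonoidHom.id _)

/-- A finite collection of words `w i ∈ A ∗ F(x₁,…,xₙ)` is a system of equations
`x_i = w_i` over `γ` if each `w i` lies in the kernel of `A ∗ F → G ∗ F`. -/
def IsEqnSystem (γ : A →* G) {n : ℕ} (w : Fin n → WordGroup A n) : Prop :=
  ∀ i, coprodMap γ n (w i) = 1

/-- Substitution of the values `g : Fin n → A` for the variables `x₁,…,xₙ`:
the evaluation homomorphism `A ∗ F(x₁,…,xₙ) →* A`. -/
def evalWord {n : ℕ} (g : Fin n → A) : WordGroup A n →* A :=
  Coprod.lift (MonoidHom.id A) (FreeGroup.lift g)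

/-- `g` is a solution of the system `{x_i = w_i}` if setting `x_i = g i` makes every
equation true in `A`. -/
def IsSolution {n : ℕ} (w : Fin n → WordGroup A n) (g : Fin n → A) : Prop :=
  ∀ i, g i = evalWord g (w i)

/-- `γ : A →* G` is algebraically closed if every system of equations over `γ` has a
unique solution in `A`. -/
def IsAlgebraicallyClosedOver (γ : A →* G) : Prop :=
  ∀ (n : ℕ) (w : Fin n → WordGroup A n), IsEqnSystem γ w → ∃! g : Fin n → A, IsSolution w g

/-- A Π-perfect subgroup of `γ : A →* G` is a normal subgroup `N` of `A` which is
finitely normally generated in `A` and satisfies `[N, ker γ] = N`. -/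
def IsPiPerfect (γ : A →* G) (N : Subgroup A) : Prop :=
  N.Normal ∧ (∃ S : Finset A, Subgroup.normalClosure (S : Set A) = N) ∧ ⁅N, γ.ker⁆ = N

end

open scoped commutatorElement

section Helpers
variable {A G : Type*} [Group A] [Group G]

@[simp] lemma evalWord_inl {n : ℕ} (g : Fin n → A) (x : A) :
    evalWord g (Coprod.inl x) = x := by simp [evalWord]

@[simp] lemma evalWord_inr_of {n : ℕ} (g : Fin n → A) (i : Fin n) :
    evalWord g (Coprod.inr (FreeGroup.of i)) = g i := by simp [evalWord]

@[simp] lemma coprodMap_inl (γ : A →* G) (n : ℕ) (x : A) :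
    coprodMap γ n (Coprod.inl x) = Coprod.inl (γ x) := rfl

lemma evalWord_comm {n : ℕ} (g : Fin n → A) (u : WordGroup A n) (k : A) :
    evalWord g ⁅u, Coprod.inl k⁆ = ⁅evalWord g u, k⁆ := by
  simp [commutatorElement_def, map_mul, map_inv]

lemma coprodMap_comm (γ : A →* G) {n : ℕ} (u : WordGroup A n) (k : A) :
    coprodMap γ n ⁅u, Coprod.inl k⁆ = ⁅coprodMap γ n u, Coprod.inl (γ k)⁆ := by
  simp [commutatorElement_def, map_mul, map_inv]

end Helpers

/-- if `γ_X` is algebraically closed then every Π-perfect subgroup of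
`γ_X` is trivial. -/
theorem piPerfect_eq_bot_of_algClosed {X G : Type*} [Group X] [Group G]
    (γX : X →* G) (hs : Function.Surjective γX) (hX : IsAlgebraicallyClosedOver γX)
    (N : Subgroup X) (hN : IsPiPerfect γX N) : N = ⊥ := by
  obtain ⟨hNorm, ⟨S, hS⟩, hComm⟩ := hN
  set n := S.card with hn
  set a : Fin n → X := fun i => ((S.equivFin.symm i : S) : X) with ha
  set Q : Subgroup X :=
    (MonoidHom.ker (evalWord (fun _ : Fin n => (1 : X)))).map (evalWord a) with hQ
  have hQnormal : Q.Normal := by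
    constructor
    rintro x ⟨v, hv, rfl⟩ g
    have hv' : evalWord (fun _ : Fin n => (1 : X)) v = 1 := hv
    refine ⟨Coprod.inl g * v * Coprod.inl g⁻¹, ?_, ?_⟩
    · show evalWord (fun _ : Fin n => (1 : X)) _ = 1
      simp [map_mul, hv']
    · simp [map_mul]
  have hNQ : N ≤ Q := by
    rw [← hS]
    refine Subgroup.normalClosure_le_normal ?_
    intro s hsS
    refine ⟨Coprod.inr (FreeGroup.of (S.equivFin ⟨s, hsS⟩)), ?_, ?_⟩
    · simp [MonoidHom.mem_ker, evalWord]
    · simp [evalWord, ha]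
  set T : Subgroup X :=
    ((MonoidHom.ker (coprodMap γX n) ⊓
      MonoidHom.ker (evalWord (fun _ : Fin n => (1 : X)))) : Subgroup (WordGroup X n)).map
      (evalWord a) with hT
  have hNT : N ≤ T := by
    conv_lhs => rw [← hComm]
    rw [Subgroup.commutator_le]
    intro x hx k hk
    obtain ⟨v, hv, rfl⟩ := hNQ hx
    have hv' : evalWord (fun _ : Fin n => (1 : X)) v = 1 := hv
    have hk1 : γX k = 1 := hk
    refine ⟨⁅v, Coprod.inl k⁆, ⟨?_, ?_⟩, ?_⟩
    · show coprodMap γX n _ = 1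
      rw [coprodMap_comm, hk1]
      simp
    · show evalWord (fun _ : Fin n => (1 : X)) _ = 1
      rw [evalWord_comm, hv']
      simp
    · rw [evalWord_comm]
  have haN : ∀ i : Fin n, a i ∈ N := by
    intro i
    rw [← hS]
    exact Subgroup.subset_normalClosure (S.equivFin.symm i).2
  have hw : ∀ i : Fin n, ∃ w : WordGroup X n,
      coprodMap γX n w = 1 ∧ evalWord (fun _ : Fin n => (1 : X)) w = 1 ∧
        evalWord a w = a i := by
    intro i
    obtain ⟨w, ⟨h1, h2⟩, h3⟩ := hNT (haN i)
    exact ⟨w, h1, h2, h3⟩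
  choose w hw1 hw2 hw3 using hw
  obtain ⟨g, _, hguniq⟩ := hX n w hw1
  have hA : a = g := hguniq a fun i => (hw3 i).symm
  have hB : (fun _ : Fin n => (1 : X)) = g := hguniq _ fun i => (hw2 i).symm
  have h1 : ∀ i, a i = 1 := by
    intro i
    rw [hA, ← hB]
  rw [← hS, eq_bot_iff]
  refine Subgroup.normalClosure_le_normal ?_
  intro s hsS
  have : s = a (S.equivFin ⟨s, hsS⟩) := by simp [ha]
  rw [this, h1]
  exact Subgroup.one_mem _
end

section
/- γ_A : A → G admits a nontrivial Π-perfect subgroup if and only if there exists a system of equations over γ_A having more than one solution. -/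
open Monoid

section Aux
variable {A G : Type*} [Group A] [Group G]

/-- Kernel characterization (hard direction): anything killed by `coprodMap γ n` lies in the
normal closure of `inl '' ker γ`. -/
lemma aux_mem_ncl_of_coprodMap_eq_one (γ : A →* G) (hs : Function.Surjective γ) (n : ℕ)
    {w : WordGroup A n} (hw : coprodMap γ n w = 1) :
    w ∈ Subgroup.normalClosure ((Coprod.inl : A →* WordGroup A n) '' (γ.ker : Set A)) := by
  set M := Subgroup.normalClosure ((Coprod.inl : A →* WordGroup A n) '' (γ.ker : Set A))
  let mk : WordGroup A n →* WordGroup A n ⧸ M := QuotientGroup.mk' M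
  have hker : γ.ker ≤ (mk.comp Coprod.inl).ker := by
    intro a ha
    simp only [MonoidHom.mem_ker, MonoidHom.comp_apply, mk, QuotientGroup.mk'_apply]
    rw [QuotientGroup.eq_one_iff]
    exact Subgroup.subset_normalClosure ⟨a, ha, rfl⟩
  let j0 : A ⧸ γ.ker →* WordGroup A n ⧸ M := QuotientGroup.lift γ.ker (mk.comp Coprod.inl) hker
  let e : A ⧸ γ.ker ≃* G := QuotientGroup.quotientKerEquivOfSurjective γ hs
  let ψ : WordGroup G n →* WordGroup A n ⧸ M :=
    Coprod.lift (j0.comp e.symm.toMonoidHom) (mk.comp Coprod.inr)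
  have key : ψ.comp (coprodMap γ n) = mk := by
    apply Coprod.hom_ext
    · ext a
      have h1 : e.symm (γ a) = QuotientGroup.mk a := by
        apply e.injective
        rw [e.apply_symm_apply]
        rfl
      simp only [MonoidHom.comp_apply, coprodMap, Coprod.map_apply_inl, ψ,
        Coprod.lift_apply_inl, MulEquiv.coe_toMonoidHom, h1]
      rfl
    · ext x
      simp [ψ, coprodMap]
  have : mk w = 1 := by rw [← key]; simp [hw]
  rwa [QuotientGroup.mk'_apply, QuotientGroup.eq_one_iff] at this

end Aux

/-- `γ_A` admits a nontrivial Π-perfect subgroup iff some system of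
equations over `γ_A` has more than one solution. -/
theorem exists_piPerfect_iff_nonunique_solution {A G : Type*} [Group A] [Group G]
    (γA : A →* G) (hs : Function.Surjective γA) :
    (∃ N : Subgroup A, IsPiPerfect γA N ∧ N ≠ ⊥) ↔
      ∃ (n : ℕ) (w : Fin n → WordGroup A n), IsEqnSystem γA w ∧
        ∃ g g' : Fin n → A, IsSolution w g ∧ IsSolution w g' ∧ g ≠ g' := by
  constructor
  · -- forward: Π-perfect subgroup gives a system with two solutions
    rintro ⟨N, ⟨hNorm, ⟨S, hS⟩, hcomm⟩, hbot⟩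
    set m := S.card with hm
    set s : Fin m → A := fun i => ((S.equivFin.symm i : S) : A) with hsdef
    have hsmem : ∀ i, s i ∈ S := fun i => (S.equivFin.symm i).2
    have hrange : Set.range s = (S : Set A) := by
      ext x
      constructor
      · rintro ⟨i, rfl⟩; exact hsmem i
      · intro hx
        refine ⟨S.equivFin ⟨x, hx⟩, ?_⟩
        simp [hsdef]
    set β : WordGroup A m →* A := evalWord s with hβ
    have hβinl : ∀ a : A, β (Coprod.inl a) = a := fun a => rfl
    have hβsurj : Function.Surjective β := fun a => ⟨Coprod.inl a, rfl⟩
    have hβinr : ∀ i, β (Coprod.inr (FreeGroup.of i)) = s i := by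
      intro i
      simp [hβ, evalWord]
    set Ntil : Subgroup (WordGroup A m) :=
      Subgroup.normalClosure (Set.range fun i : Fin m => Coprod.inr (FreeGroup.of i)) with hNtil
    set Ktil : Subgroup (WordGroup A m) :=
      Subgroup.normalClosure ((Coprod.inl : A →* WordGroup A m) '' (γA.ker : Set A)) with hKtil
    have himg : β '' (Set.range fun i : Fin m => (Coprod.inr (FreeGroup.of i) : WordGroup A m))
        = Set.range s := by
      rw [← Set.range_comp]
      exact congrArg Set.range (funext fun i => hβinr i)
    have hmapN : Subgroup.map β Ntil = N := by
      rw [hNtil, Subgroup.map_normalClosure _ _ hβsurj, himg, hrange, hS]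
    have hmapK : Subgroup.map β Ktil = γA.ker := by
      rw [hKtil, Subgroup.map_normalClosure _ _ hβsurj]
      have : β '' ((Coprod.inl : A →* WordGroup A m) '' (γA.ker : Set A)) = (γA.ker : Set A) := by
        rw [Set.image_image]
        simp [hβinl]
      rw [this, Subgroup.normalClosure_eq_self]
    have hmapP : Subgroup.map β ⁅Ntil, Ktil⁆ = N := by
      rw [Subgroup.map_commutator, hmapN, hmapK, hcomm]
    -- choose words
    have hWi : ∀ i : Fin m, ∃ W : WordGroup A m, W ∈ ⁅Ntil, Ktil⁆ ∧ β W = s i := by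
      intro i
      have : s i ∈ N := hS ▸ Subgroup.subset_normalClosure (hsmem i)
      rw [← hmapP] at this
      obtain ⟨W, hW, hWβ⟩ := this
      exact ⟨W, hW, hWβ⟩
    choose w hwP hwβ using hWi
    refine ⟨m, w, ?_, s, (fun _ => 1), ?_, ?_, ?_⟩
    · -- IsEqnSystem: coprodMap kills each w i
      intro i
      have hKker : Ktil ≤ (coprodMap γA m).ker := by
        rw [hKtil]
        apply Subgroup.normalClosure_le_normal
        rintro _ ⟨a, ha, rfl⟩
        have : γA a = 1 := ha
        simp [MonoidHom.mem_ker, coprodMap, Coprod.map_apply_inl, this]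
      have hle : Subgroup.map (coprodMap γA m) ⁅Ntil, Ktil⁆ ≤ ⊥ := by
        rw [Subgroup.map_commutator]
        refine le_trans (Subgroup.commutator_mono le_top ?_) (Subgroup.commutator_le_right _ _)
        rintro _ ⟨x, hx, rfl⟩
        simpa [MonoidHom.mem_ker] using hKker hx
      have := hle (Subgroup.mem_map_of_mem _ (hwP i))
      simpa using this
    · -- s is a solution
      intro i
      exact (hwβ i).symm
    · -- 1 is a solution
      intro i
      have hNker : Ntil ≤ (evalWord (fun _ : Fin m => (1 : A))).ker := by
        rw [hNtil]
        apply Subgroup.normalClosure_le_normal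
        rintro _ ⟨j, rfl⟩
        simp [MonoidHom.mem_ker, evalWord]
      have hle : Subgroup.map (evalWord (fun _ : Fin m => (1 : A))) ⁅Ntil, Ktil⁆ ≤ ⊥ := by
        rw [Subgroup.map_commutator]
        refine le_trans (Subgroup.commutator_mono ?_ le_top) (Subgroup.commutator_le_left _ _)
        rintro _ ⟨x, hx, rfl⟩
        simpa [MonoidHom.mem_ker] using hNker hx
      have := hle (Subgroup.mem_map_of_mem _ (hwP i))
      simp only [Subgroup.mem_bot] at this
      exact this.symm
    · -- s ≠ 1
      intro h
      apply hbot
      rw [← hS]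
      have hsub : (S : Set A) ⊆ ((⊥ : Subgroup A) : Set A) := by
        intro x hx
        have : x = s (S.equivFin ⟨x, hx⟩) := by simp [hsdef]
        rw [this, congrFun h (S.equivFin ⟨x, hx⟩)]
        exact Subgroup.mem_bot.mpr rfl
      exact le_bot_iff.mp (Subgroup.normalClosure_le_normal hsub)
  · -- backward: a system with two solutions gives a Π-perfect subgroup
    rintro ⟨n, w, hsys, g, g', hg, hg', hne⟩
    classical
    set φ : WordGroup A n →* A := evalWord g with hφ
    set φ' : WordGroup A n →* A := evalWord g' with hφ'
    set S : Finset A := Finset.image (fun i => g i * (g' i)⁻¹) Finset.univ with hSdef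
    set N : Subgroup A := Subgroup.normalClosure (S : Set A) with hN
    haveI hNn : N.Normal := Subgroup.normalClosure_normal
    have hdN : ∀ i, g i * (g' i)⁻¹ ∈ N :=
      fun i => Subgroup.subset_normalClosure (by simp [hSdef])
    set K : Subgroup A := γA.ker with hK
    haveI hKn : K.Normal := MonoidHom.normal_ker γA
    haveI hCn : (⁅N, K⁆ : Subgroup A).Normal := Subgroup.commutator_normal N K
    -- Step A: δ u ∈ N for all u
    have stepA : ∀ u : WordGroup A n, φ u * (φ' u)⁻¹ ∈ N := by
      have hcomp : (QuotientGroup.mk' N).comp φ = (QuotientGroup.mk' N).comp φ' := by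
        apply Coprod.hom_ext
        · rfl
        · apply FreeGroup.ext_hom
          intro i
          simp only [MonoidHom.comp_apply, hφ, hφ', evalWord, Coprod.lift_apply_inr,
            FreeGroup.lift_apply_of, QuotientGroup.mk'_apply]
          rw [QuotientGroup.eq]
          have h1 := hNn.conj_mem _ (hdN i) ((g' i)⁻¹)
          have h2 := N.inv_mem h1
          convert h2 using 1
          group
      intro u
      have : (QuotientGroup.mk' N) (φ u) = (QuotientGroup.mk' N) (φ' u) := by
        rw [← MonoidHom.comp_apply, ← MonoidHom.comp_apply, hcomp]
      rw [QuotientGroup.mk'_apply, QuotientGroup.mk'_apply, QuotientGroup.eq] at this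
      have h4 := N.inv_mem this
      have h5 := hNn.conj_mem _ h4 (φ u)
      convert h5 using 1
      group
    -- Step B/C: each w i has δ (w i) ∈ ⁅N, K⁆
    have stepC : ∀ i, g i * (g' i)⁻¹ ∈ ⁅N, K⁆ := by
      intro i
      have hwi := aux_mem_ncl_of_coprodMap_eq_one γA hs n (hsys i)
      set T : Subgroup (WordGroup A n) :=
        MonoidHom.eqLocus ((QuotientGroup.mk' ⁅N, K⁆).comp φ) ((QuotientGroup.mk' ⁅N, K⁆).comp φ')
        with hT
      have hTmem : ∀ u : WordGroup A n, u ∈ T ↔ φ u * (φ' u)⁻¹ ∈ ⁅N, K⁆ := by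
        intro u
        rw [hT]
        constructor
        · intro h
          have h1 : (QuotientGroup.mk (φ u) : A ⧸ ⁅N, K⁆) = QuotientGroup.mk (φ' u) := h
          rw [QuotientGroup.eq] at h1
          have h4 := (⁅N, K⁆ : Subgroup A).inv_mem h1
          have h5 := hCn.conj_mem _ h4 (φ u)
          convert h5 using 1
          group
        · intro h
          show (QuotientGroup.mk (φ u) : A ⧸ ⁅N, K⁆) = QuotientGroup.mk (φ' u)
          rw [QuotientGroup.eq]
          have h5 := hCn.conj_mem _ ((⁅N, K⁆ : Subgroup A).inv_mem h) ((φ u)⁻¹)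
          convert h5 using 1
          group
      have hsubset : Group.conjugatesOfSet
          ((Coprod.inl : A →* WordGroup A n) '' (γA.ker : Set A)) ⊆ (T : Set (WordGroup A n)) := by
        intro x hx
        rw [Group.mem_conjugatesOfSet_iff] at hx
        obtain ⟨y, ⟨k, hk, rfl⟩, hconj⟩ := hx
        rw [isConj_iff] at hconj
        obtain ⟨c, rfl⟩ := hconj
        rw [SetLike.mem_coe, hTmem]
        have hφk : φ (Coprod.inl k) = k := rfl
        have hφ'k : φ' (Coprod.inl k) = k := rfl
        open scoped commutatorElement in
        have expand : φ (c * Coprod.inl k * c⁻¹) * (φ' (c * Coprod.inl k * c⁻¹))⁻¹ =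
            ⁅φ c * (φ' c)⁻¹, φ' c * k * (φ' c)⁻¹⁆ := by
          simp only [map_mul, map_inv, hφk, hφ'k, commutatorElement_def]
          group
        rw [expand]
        exact Subgroup.commutator_mem_commutator (stepA c)
          (hKn.conj_mem k hk (φ' c))
      have hle : Subgroup.normalClosure
          ((Coprod.inl : A →* WordGroup A n) '' (γA.ker : Set A)) ≤ T :=
        (Subgroup.closure_le T).mpr hsubset
      have hwiT : w i ∈ T := hle hwi
      rw [hTmem] at hwiT
      rwa [← hg i, ← hg' i] at hwiT
    refine ⟨N, ⟨hNn, ⟨S, rfl⟩, ?_⟩, ?_⟩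
    · -- ⁅N, K⁆ = N
      refine le_antisymm (Subgroup.commutator_le_left N K) ?_
      apply Subgroup.normalClosure_le_normal
      intro x hx
      simp only [hSdef, Finset.coe_image, Finset.coe_univ, Set.image_univ,
        Set.mem_range] at hx
      obtain ⟨i, rfl⟩ := hx
      exact stepC i
    · -- N ≠ ⊥
      intro hNbot
      apply hne
      funext i
      have := hdN i
      rw [hNbot, Subgroup.mem_bot] at this
      exact (mul_inv_eq_one.mp this)
end

section
/- If N_1, …, N_n are Π-perfect subgroups of γ_A, then the normal subgroup generated by N_1 ∪ ⋯ ∪ N_n is also Π-perfect. -/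
open Monoid

/-- the normal subgroup generated by finitely many Π-perfect subgroups
is Π-perfect. -/
theorem piPerfect_normalClosure_iUnion {A G : Type*} [Group A] [Group G]
    (γA : A →* G) (hs : Function.Surjective γA) (n : ℕ) (N : Fin n → Subgroup A)
    (hN : ∀ i, IsPiPerfect γA (N i)) :
    IsPiPerfect γA (Subgroup.normalClosure (⋃ i, (N i : Set A))) := by
  set M := Subgroup.normalClosure (⋃ i, (N i : Set A)) with hM
  have hNi_le : ∀ i, N i ≤ M := fun i x hx =>
    Subgroup.subset_normalClosure (Set.mem_iUnion.2 ⟨i, hx⟩)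
  have hMnormal : M.Normal := Subgroup.normalClosure_normal
  refine ⟨hMnormal, ?_, ?_⟩
  · classical
    choose S hS using fun i => (hN i).2.1
    refine ⟨Finset.univ.biUnion S, le_antisymm ?_ ?_⟩
    · apply Subgroup.normalClosure_le_normal
      intro x hx
      simp only [Finset.coe_biUnion, Set.mem_iUnion] at hx
      obtain ⟨i, -, hx⟩ := hx
      exact hNi_le i (by rw [← hS i]; exact Subgroup.subset_normalClosure hx)
    · apply Subgroup.normalClosure_le_normal
      intro x hx
      rw [Set.mem_iUnion] at hx
      obtain ⟨i, hx⟩ := hx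
      rw [SetLike.mem_coe, ← hS i] at hx
      exact Subgroup.normalClosure_mono (by
        intro a ha
        simp only [Finset.coe_biUnion, Set.mem_iUnion]
        exact ⟨i, Finset.mem_coe.2 (Finset.mem_univ i), ha⟩) hx
  · refine le_antisymm (Subgroup.commutator_le_left _ _) ?_
    apply Subgroup.normalClosure_le_normal
    intro x hx
    rw [Set.mem_iUnion] at hx
    obtain ⟨i, hx⟩ := hx
    have hx' : x ∈ N i := hx
    rw [← (hN i).2.2] at hx'
    have : x ∈ ⁅N i, γA.ker⁆ := hx'
    exact Subgroup.commutator_mono (hNi_le i) le_rfl this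
end

section
/- If f : A → B is a surjective group homomorphism with A finitely generated and B finitely related (admitting a presentation with finitely many relators), then B is finitely presented and ker(f) is finitely normally generated in A (i.e., ker(f) is the normal closure of a finite subset of A). -/
universe u v w

/-- If a free group is finitely generated then its basis is finite. -/
private lemma freeGroup_fg_finite {κ : Type v} (h : Group.FG (FreeGroup κ)) : Finite κ := by
  haveI := h
  have hsurj : Function.Surjective (Abelianization.of (G := FreeGroup κ)) := by
    intro x; exact Quotient.inductionOn x fun g => ⟨g, rfl⟩
  haveI : Group.FG (Abelianization (FreeGroup κ)) := Group.fg_of_surjective hsurj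
  haveI : AddGroup.FG (FreeAbelianGroup κ) :=
    inferInstanceAs (AddGroup.FG (Additive (Abelianization (FreeGroup κ))))
  haveI : AddGroup.FG (κ →₀ ℤ) :=
    AddGroup.fg_of_surjective (f := (FreeAbelianGroup.equivFinsupp κ).toAddMonoidHom)
      (FreeAbelianGroup.equivFinsupp κ).surjective
  haveI : Module.Finite ℤ (κ →₀ ℤ) := Module.Finite.iff_addGroup_fg.mpr ‹_›
  exact Module.Finite.finite_basis (Finsupp.basisSingleOne (R := ℤ))

/-- Every element of a free group lies in the subgroup generated by finitely many
of the free generators. -/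
private lemma freeGroup_exists_finset {ι : Type v} (x : FreeGroup ι) :
    ∃ J : Finset ι, x ∈ Subgroup.closure (FreeGroup.of '' (J : Set ι)) := by
  classical
  induction x using FreeGroup.induction_on with
  | C1 => exact ⟨∅, one_mem _⟩
  | of x => exact ⟨{x}, Subgroup.subset_closure ⟨x, by simp, rfl⟩⟩
  | inv_of x ih =>
    obtain ⟨J, hJ⟩ := ih
    exact ⟨J, inv_mem hJ⟩
  | mul x y ihx ihy =>
    obtain ⟨J1, h1⟩ := ihx
    obtain ⟨J2, h2⟩ := ihy
    refine ⟨J1 ∪ J2, mul_mem ?_ ?_⟩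
    · exact Subgroup.closure_mono (Set.image_mono (by simp)) h1
    · exact Subgroup.closure_mono (Set.image_mono (by simp)) h2

/-- B. H. Neumann's lemma: if a group has a finite presentation over some free group,
then the kernel of any surjection from a free group of finite rank onto it is finitely
normally generated. -/
private lemma ker_finitely_normally_generated {G : Type w} [Group G] {β : Type v} {γ : Type u}
    [Finite γ] (q : FreeGroup β →* G) (hq : Function.Surjective q) (T : Finset (FreeGroup β))
    (hT : q.ker = Subgroup.normalClosure (T : Set (FreeGroup β)))
    (π : FreeGroup γ →* G) (hπ : Function.Surjective π) :
    ∃ S : Finset (FreeGroup γ), π.ker = Subgroup.normalClosure (S : Set (FreeGroup γ)) := by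
  classical
  haveI : Fintype γ := Fintype.ofFinite γ
  choose u hu using fun b : β => hπ (q (FreeGroup.of b))
  choose v hv using fun c : γ => hq (π (FreeGroup.of c))
  set φ : FreeGroup β →* FreeGroup γ := FreeGroup.lift u with hφdef
  set ψ : FreeGroup γ →* FreeGroup β := FreeGroup.lift v with hψdef
  have hφ : ∀ x, π (φ x) = q x := by
    have : π.comp φ = q := FreeGroup.ext_hom _ _ (by simp [hφdef, hu])
    intro x; exact DFunLike.congr_fun this x
  have hψ : ∀ x, q (ψ x) = π x := by
    have : q.comp ψ = π := FreeGroup.ext_hom _ _ (by simp [hψdef, hv])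
    intro x; exact DFunLike.congr_fun this x
  set S : Finset (FreeGroup γ) :=
    T.image φ ∪ Finset.univ.image (fun c : γ => FreeGroup.of c * (φ (ψ (FreeGroup.of c)))⁻¹)
    with hSdef
  set N := Subgroup.normalClosure (S : Set (FreeGroup γ)) with hNdef
  have hSN : (S : Set (FreeGroup γ)) ⊆ N := Subgroup.subset_normalClosure
  have hmemT : ∀ t ∈ T, φ t ∈ N := fun t ht =>
    hSN (by simp only [hSdef, Finset.coe_union, Set.mem_union, Finset.coe_image,
      Set.mem_image, Finset.mem_coe]; exact Or.inl ⟨t, ht, rfl⟩)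
  have hmemc : ∀ c : γ, FreeGroup.of c * (φ (ψ (FreeGroup.of c)))⁻¹ ∈ N := fun c =>
    hSN (by simp only [hSdef, Finset.coe_union, Set.mem_union, Finset.coe_image,
      Set.mem_image, Finset.mem_coe, Finset.mem_univ]; exact Or.inr ⟨c, trivial, rfl⟩)
  have hN_le : N ≤ π.ker := by
    refine Subgroup.normalClosure_le_normal ?_
    intro x hx
    simp only [hSdef, Finset.coe_union, Set.mem_union, Finset.coe_image, Set.mem_image,
      Finset.mem_coe] at hx
    rcases hx with ⟨t, ht, rfl⟩ | ⟨c, _, rfl⟩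
    · have : t ∈ q.ker := by rw [hT]; exact Subgroup.subset_normalClosure ht
      simp only [SetLike.mem_coe, MonoidHom.mem_ker] at this ⊢
      rw [hφ, this]
    · simp only [SetLike.mem_coe, MonoidHom.mem_ker, map_mul, map_inv, hφ, hψ]
      simp
  have key : ∀ x : FreeGroup β, x ∈ q.ker → φ x ∈ N := by
    intro x hx
    rw [hT] at hx
    have hcl : Subgroup.normalClosure (T : Set (FreeGroup β)) ≤ N.comap φ := by
      haveI : (N.comap φ).Normal := Subgroup.normal_comap φ
      exact Subgroup.normalClosure_le_normal fun t ht => hmemT t ht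
    exact hcl hx
  have hθ : (QuotientGroup.mk' N).comp (φ.comp ψ) = QuotientGroup.mk' N := by
    refine FreeGroup.ext_hom _ _ fun c => ?_
    have h1 : (QuotientGroup.mk' N) (FreeGroup.of c * (φ (ψ (FreeGroup.of c)))⁻¹) = 1 :=
      (QuotientGroup.eq_one_iff _).mpr (hmemc c)
    rw [map_mul, map_inv, mul_inv_eq_one] at h1
    simpa using h1.symm
  refine ⟨S, le_antisymm ?_ hN_le⟩
  intro w hw
  have h1 : ψ w ∈ q.ker := by
    rw [MonoidHom.mem_ker, hψ]
    exact hw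
  have h2 : φ (ψ w) ∈ N := key _ h1
  have h3 := DFunLike.congr_fun hθ w
  simp only [MonoidHom.comp_apply] at h3
  have h4 : (QuotientGroup.mk' N) (φ (ψ w)) = 1 := (QuotientGroup.eq_one_iff _).mpr h2
  exact (QuotientGroup.eq_one_iff w).mp (h3.symm.trans h4)

/-- if `f : A → B` is a surjective homomorphism with `A` finitely
generated and `B` finitely related (it admits a presentation with possibly infinitely
many generators but finitely many relators), then `B` is finitely presented and
`ker f` is the normal closure in `A` of a finite subset of `A`. -/
theorem finitelyPresented_and_ker_finitelyNormallyGenerated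
    {A B : Type u} [Group A] [Group B] (f : A →* B) (hf : Function.Surjective f)
    (hA : Group.FG A)
    (hB : ∃ (ι : Type u) (p : FreeGroup ι →* B), Function.Surjective p ∧
      ∃ T : Finset (FreeGroup ι), p.ker = Subgroup.normalClosure (T : Set (FreeGroup ι))) :
    (∃ (m : ℕ) (q : FreeGroup (Fin m) →* B), Function.Surjective q ∧
      ∃ T : Finset (FreeGroup (Fin m)),
        q.ker = Subgroup.normalClosure (T : Set (FreeGroup (Fin m)))) ∧
    ∃ S : Finset A, f.ker = Subgroup.normalClosure (S : Set A) := by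
  classical
  obtain ⟨ι, p, hp, T, hT⟩ := hB
  -- Step 1: the index set `ι` is forced to be finite.
  choose g hg using fun x : FreeGroup ι => freeGroup_exists_finset x
  set J : Finset ι := T.biUnion g with hJdef
  have hTJ : ∀ t ∈ T, t ∈ Subgroup.closure (FreeGroup.of '' (J : Set ι)) := by
    intro t ht
    refine Subgroup.closure_mono (Set.image_mono ?_) (hg t)
    intro i hi
    exact Finset.mem_coe.mpr (Finset.mem_biUnion.mpr ⟨t, ht, hi⟩)
  set κ := {i : ι // i ∉ J} with hκdef
  set φ : FreeGroup ι →* FreeGroup κ :=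
    FreeGroup.lift (fun i => if h : i ∈ J then 1 else FreeGroup.of (⟨i, h⟩ : κ)) with hφdef
  have hker : p.ker ≤ φ.ker := by
    rw [hT]
    refine Subgroup.normalClosure_le_normal ?_
    intro t ht
    have : Subgroup.closure (FreeGroup.of '' (J : Set ι)) ≤ φ.ker := by
      refine (Subgroup.closure_le _).mpr ?_
      rintro _ ⟨i, hi, rfl⟩
      simp only [SetLike.mem_coe, MonoidHom.mem_ker, hφdef, FreeGroup.lift_apply_of]
      rw [dif_pos (Finset.mem_coe.mp hi)]
    exact this (hTJ t ht)
  have hφsurj : Function.Surjective φ := by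
    rw [← MonoidHom.range_eq_top, eq_top_iff, ← FreeGroup.closure_range_of κ]
    refine (Subgroup.closure_le _).mpr ?_
    rintro _ ⟨⟨i, hi⟩, rfl⟩
    refine ⟨FreeGroup.of i, ?_⟩
    simp only [hφdef, FreeGroup.lift_apply_of]
    rw [dif_neg hi]
  -- transfer the surjection `φ` through `p` to get a surjection `B → FreeGroup κ`
  have hBfg : Group.FG B := Group.fg_of_surjective hf
  have hκfg : Group.FG (FreeGroup κ) := by
    set e := QuotientGroup.quotientKerEquivOfSurjective p hp with hedef
    set ψ : B →* FreeGroup κ :=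
      (QuotientGroup.lift p.ker φ fun x hx => hker hx).comp e.symm.toMonoidHom with hψdef
    have hψsurj : Function.Surjective ψ := by
      intro y
      obtain ⟨x, rfl⟩ := hφsurj y
      refine ⟨p x, ?_⟩
      have h1 : e.symm (p x) = QuotientGroup.mk x := by
        apply e.injective
        simp only [MulEquiv.apply_symm_apply]
        rfl
      simp only [hψdef, MonoidHom.comp_apply, MulEquiv.coe_toMonoidHom, h1]
      rfl
    exact Group.fg_of_surjective hψsurj
  haveI : Finite κ := freeGroup_fg_finite hκfg
  haveI : Finite ι := by
    have h1 : (Set.univ : Set ι) ⊆ (J : Set ι) ∪ Set.range (Subtype.val : κ → ι) := by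
      intro i _
      by_cases h : i ∈ J
      · exact Or.inl h
      · exact Or.inr ⟨⟨i, h⟩, rfl⟩
    have h2 : (Set.univ : Set ι).Finite :=
      Set.Finite.subset ((J.finite_toSet).union (Set.finite_range _)) h1
    exact Set.finite_univ_iff.mp h2
  haveI : Fintype ι := Fintype.ofFinite ι
  -- Step 2: transport the presentation along `ι ≃ Fin m`.
  set m := Fintype.card ι with hmdef
  set eι : ι ≃ Fin m := Fintype.equivFin ι with heι
  set E : FreeGroup ι ≃* FreeGroup (Fin m) := FreeGroup.freeGroupCongr eι with hEdef
  set q : FreeGroup (Fin m) →* B := p.comp E.symm.toMonoidHom with hqdef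
  have hqsurj : Function.Surjective q := hp.comp E.symm.surjective
  have hqker : q.ker = Subgroup.normalClosure ((T.image E : Finset (FreeGroup (Fin m))) :
      Set (FreeGroup (Fin m))) := by
    have h1 : q.ker = Subgroup.map E.toMonoidHom p.ker := by
      ext x
      simp only [MonoidHom.mem_ker, hqdef, MonoidHom.comp_apply, MulEquiv.coe_toMonoidHom,
        Subgroup.mem_map_equiv]
    calc q.ker = Subgroup.map E.toMonoidHom p.ker := h1
      _ = Subgroup.map E.toMonoidHom (Subgroup.normalClosure (T : Set (FreeGroup ι))) := by
          rw [hT]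
      _ = Subgroup.normalClosure (E.toMonoidHom '' (T : Set (FreeGroup ι))) :=
          Subgroup.map_normalClosure _ _ (by exact E.surjective)
      _ = _ := by rw [Finset.coe_image]; rfl
  have part1 : (∃ (m : ℕ) (q : FreeGroup (Fin m) →* B), Function.Surjective q ∧
      ∃ T : Finset (FreeGroup (Fin m)),
        q.ker = Subgroup.normalClosure (T : Set (FreeGroup (Fin m)))) :=
    ⟨m, q, hqsurj, T.image E, hqker⟩
  refine ⟨part1, ?_⟩
  -- Step 3: kernel of `f` is finitely normally generated.
  obtain ⟨S₀, hS₀⟩ := hA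
  set α : FreeGroup {a : A // a ∈ S₀} →* A := FreeGroup.lift Subtype.val with hαdef
  have hαsurj : Function.Surjective α := by
    rw [← MonoidHom.range_eq_top, hαdef, FreeGroup.range_lift_eq_closure, Subtype.range_coe]
    exact hS₀
  set π : FreeGroup {a : A // a ∈ S₀} →* B := f.comp α with hπdef
  have hπsurj : Function.Surjective π := hf.comp hαsurj
  obtain ⟨R, hR⟩ := ker_finitely_normally_generated q hqsurj (T.image E) hqker π hπsurj
  have hkerf : f.ker = Subgroup.map α π.ker := by
    ext a
    constructor
    · intro ha
      obtain ⟨w, rfl⟩ := hαsurj a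
      exact ⟨w, by simpa [hπdef, MonoidHom.mem_ker] using ha, rfl⟩
    · rintro ⟨w, hw, rfl⟩
      simpa [hπdef, MonoidHom.mem_ker] using hw
  refine ⟨R.image α, ?_⟩
  rw [hkerf, hR, Subgroup.map_normalClosure _ _ hαsurj, Finset.coe_image]
end

section
/- Let γ_A : A → G and γ_X : X → G be surjective homomorphisms with γ_X algebraically closed, and let f : A → X satisfy γ_X ∘ f = γ_A. If N ⊴ A is a Π-perfect subgroup of γ_A, then N ⊆ ker(f). -/
open Monoid

namespace PiPerfectAux

open Monoid

variable {A X G : Type*} [Group A] [Group X] [Group G]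

@[simp] lemma evalWord_inl {n : ℕ} (g : Fin n → X) (x : X) :
    evalWord g (Coprod.inl x) = x := by
  simp [evalWord]

@[simp] lemma evalWord_inr_of {n : ℕ} (g : Fin n → X) (i : Fin n) :
    evalWord g (Coprod.inr (FreeGroup.of i)) = g i := by
  simp [evalWord]

@[simp] lemma coprodMap_inl (γ : X →* G) {n : ℕ} (x : X) :
    coprodMap γ n (Coprod.inl x) = Coprod.inl (γ x) := rfl

/-- Elements `b : A` that are "expressible": there is a word `v` over `X` with
variables, evaluating to `1` at the all-ones assignment and to `f b` at `f ∘ a`. -/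
def P (f : A →* X) {n : ℕ} (a : Fin n → A) : Subgroup A where
  carrier := { b | ∃ v : WordGroup X n,
    evalWord (fun _ => (1 : X)) v = 1 ∧ evalWord (f ∘ a) v = f b }
  one_mem' := ⟨1, by simp, by simp⟩
  mul_mem' := by
    rintro b c ⟨v, hv1, hv2⟩ ⟨u, hu1, hu2⟩
    exact ⟨v * u, by simp [hv1, hu1], by simp [hv2, hu2]⟩
  inv_mem' := by
    rintro b ⟨v, hv1, hv2⟩
    exact ⟨v⁻¹, by simp [hv1], by simp [hv2]⟩

lemma P_normal (f : A →* X) {n : ℕ} (a : Fin n → A) : (P f a).Normal := by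
  constructor
  rintro b ⟨v, hv1, hv2⟩ c
  refine ⟨Coprod.inl (f c) * v * (Coprod.inl (f c))⁻¹, ?_, ?_⟩ <;>
    simp [hv1, hv2]

lemma mem_P (f : A →* X) {n : ℕ} (a : Fin n → A) (i : Fin n) : a i ∈ P f a :=
  ⟨Coprod.inr (FreeGroup.of i), by simp, by simp⟩

/-- Expressible elements whose word additionally dies in `G ∗ F`. -/
def M (γX : X →* G) (f : A →* X) {n : ℕ} (a : Fin n → A) : Subgroup A where
  carrier := { b | ∃ w : WordGroup X n, coprodMap γX n w = 1 ∧
    evalWord (fun _ => (1 : X)) w = 1 ∧ evalWord (f ∘ a) w = f b }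
  one_mem' := ⟨1, by simp, by simp, by simp⟩
  mul_mem' := by
    rintro b c ⟨v, hv0, hv1, hv2⟩ ⟨u, hu0, hu1, hu2⟩
    exact ⟨v * u, by simp [hv0, hu0], by simp [hv1, hu1], by simp [hv2, hu2]⟩
  inv_mem' := by
    rintro b ⟨v, hv0, hv1, hv2⟩
    exact ⟨v⁻¹, by simp [hv0], by simp [hv1], by simp [hv2]⟩

lemma M_normal (γX : X →* G) (f : A →* X) {n : ℕ} (a : Fin n → A) :
    (M γX f a).Normal := by
  constructor
  rintro b ⟨v, hv0, hv1, hv2⟩ c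
  refine ⟨Coprod.inl (f c) * v * (Coprod.inl (f c))⁻¹, ?_, ?_, ?_⟩ <;>
    simp [hv0, hv1, hv2]

end PiPerfectAux

/-- if `f : A → X` is a homomorphism over `G` into an algebraically
closed `γ_X`, then every Π-perfect subgroup of `γ_A` is contained in `ker f`. -/
theorem piPerfect_le_ker {A X G : Type*} [Group A] [Group X] [Group G]
    (γA : A →* G) (γX : X →* G) (hA : Function.Surjective γA)
    (hX : Function.Surjective γX) (hac : IsAlgebraicallyClosedOver γX)
    (f : A →* X) (hf : γX.comp f = γA)
    (N : Subgroup A) (hN : IsPiPerfect γA N) : N ≤ f.ker := by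
  classical
  obtain ⟨hNnorm, ⟨S, hS⟩, hcomm⟩ := hN
  set n := S.card with hn
  set a : Fin n → A := fun i => ((S.equivFin.symm i : S) : A) with ha
  have hrange : Set.range a = (S : Set A) := by
    ext b
    constructor
    · rintro ⟨i, rfl⟩; exact (S.equivFin.symm i).2
    · intro hb; exact ⟨S.equivFin ⟨b, hb⟩, by simp [ha]⟩
  have hNa : Subgroup.normalClosure (Set.range a) = N := by rw [hrange, hS]
  -- N ≤ P
  have hNP : N ≤ PiPerfectAux.P f a := by
    rw [← hNa]
    haveI := PiPerfectAux.P_normal f a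
    refine Subgroup.normalClosure_le_normal ?_
    rintro b ⟨i, rfl⟩
    exact PiPerfectAux.mem_P f a i
  -- ⁅P, ker γA⁆ ≤ M
  have hPM : ⁅PiPerfectAux.P f a, γA.ker⁆ ≤ PiPerfectAux.M γX f a := by
    rw [Subgroup.commutator_le]
    rintro p ⟨v, hv1, hv2⟩ k hk
    have hγk : γX (f k) = 1 := by
      rw [MonoidHom.mem_ker, ← hf] at hk
      exact hk
    refine ⟨v * Coprod.inl (f k) * v⁻¹ * (Coprod.inl (f k))⁻¹, ?_, ?_, ?_⟩
    · simp [commutatorElement_def, hγk]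
    · simp [commutatorElement_def, hv1]
    · simp [commutatorElement_def, hv2]
  -- N ≤ M
  have hNM : N ≤ PiPerfectAux.M γX f a := by
    calc N = ⁅N, γA.ker⁆ := hcomm.symm
    _ ≤ ⁅PiPerfectAux.P f a, γA.ker⁆ :=
        Subgroup.commutator_mono hNP le_rfl
    _ ≤ PiPerfectAux.M γX f a := hPM
  -- extract words
  have hw : ∀ i : Fin n, ∃ w : WordGroup X n, coprodMap γX n w = 1 ∧
      evalWord (fun _ => (1 : X)) w = 1 ∧ evalWord (f ∘ a) w = f (a i) := by
    intro i
    have : a i ∈ N := by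
      rw [← hNa]
      exact Subgroup.subset_normalClosure ⟨i, rfl⟩
    exact hNM this
  choose w hw0 hw1 hw2 using hw
  have hsys : IsEqnSystem γX w := hw0
  obtain ⟨g, hg, hguniq⟩ := hac n w hsys
  have h1 : (fun _ : Fin n => (1 : X)) = g :=
    hguniq _ (fun i => (hw1 i).symm)
  have h2 : (f ∘ a) = g := hguniq _ (fun i => (hw2 i).symm)
  have hfa : ∀ i, f (a i) = 1 := by
    intro i
    have := congrFun (h2.trans h1.symm) i
    simpa using this
  -- conclude
  rw [← hNa]
  refine Subgroup.normalClosure_le_normal ?_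
  rintro b ⟨i, rfl⟩
  exact hfa i
end

section
/- With notation as above, if f : γ_A → γ_B induces an isomorphism E(f) : E(A) → E(B), then the induced map A/Γ^(n)(γ_A) → B/Γ^(n)(γ_B) is injective for all n. -/
lemma commSet_image {EA EB : Type*} [Group EA] [Group EB] (e : EA ≃* EB) (S : Set EA) :
    commSet ((e : EA → EB) '' S) = (e : EA → EB) '' commSet S := by
  ext z
  constructor
  · rintro ⟨a, ⟨a', ha', rfl⟩, b, ⟨b', hb', rfl⟩, rfl⟩
    exact ⟨a' * b' * a'⁻¹ * b'⁻¹, ⟨a', ha', b', hb', rfl⟩, by simp [map_mul]⟩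
  · rintro ⟨z', ⟨a, ha, b, hb, rfl⟩, rfl⟩
    exact ⟨e a, ⟨a, ha, rfl⟩, e b, ⟨b, hb, rfl⟩, by simp [map_mul]⟩

lemma ratDer_equiv {G EA EB : Type*} [Group G] [Group EA] [Group EB]
    (γEA : EA →* G) (γEB : EB →* G) (e : EA ≃* EB)
    (h : ∀ x, γEB (e x) = γEA x) (n : ℕ) :
    ∀ x, e x ∈ ratDer γEB n ↔ x ∈ ratDer γEA n := by
  induction n with
  | zero =>
    intro x
    simp [ratDer, MonoidHom.mem_ker, h]
  | succ n ih =>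
    have himg : ratDer γEB n = (e : EA → EB) '' ratDer γEA n := by
      ext y
      constructor
      · intro hy
        exact ⟨e.symm y, (ih (e.symm y)).mp (by simpa using hy), by simp⟩
      · rintro ⟨x, hx, rfl⟩
        exact (ih x).mpr hx
    intro x
    constructor
    · rintro ⟨h1, m, hm, h2⟩
      refine ⟨(ih x).mp h1, m, hm, ?_⟩
      rw [himg, commSet_image] at h2
      have h2' : e (x ^ m) ∈ Subgroup.map e.toMonoidHom
          (Subgroup.closure (commSet (ratDer γEA n))) := by
        rw [MonoidHom.map_closure]
        simpa [map_zpow] using h2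
      obtain ⟨y, hy, hxy⟩ := h2'
      have hyx : y = x ^ m := e.injective (by simpa using hxy)
      exact hyx ▸ hy
    · rintro ⟨h1, m, hm, h2⟩
      refine ⟨(ih x).mpr h1, m, hm, ?_⟩
      rw [himg, commSet_image]
      have h2' : e (x ^ m) ∈ Subgroup.map e.toMonoidHom
          (Subgroup.closure (commSet (ratDer γEA n))) :=
        Subgroup.mem_map_of_mem _ h2
      rw [MonoidHom.map_closure] at h2'
      simpa [map_zpow] using h2'

/-- in the setting of the localization `(E, p)`, if the morphism
`f : γ_A → γ_B` induces an isomorphism `E(f) : E(A) ≅ E(B)`, then for every `n` the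
induced map `A/Γ^(n)(γ_A) → B/Γ^(n)(γ_B)` is injective, where
`Γ^(n)(γ_A) = ker(A → E(A)/Γ_r^(n)(γ_{E(A)})) = p_A⁻¹(Γ_r^(n)(γ_{E(A)}))`. -/
theorem localDerived_quotient_injective {A B G EA EB : Type*}
    [Group A] [Group B] [Group G] [Group EA] [Group EB]
    (γA : A →* G) (γB : B →* G) (γEA : EA →* G) (γEB : EB →* G)
    (hA : Function.Surjective γA) (hB : Function.Surjective γB)
    (hEA : Function.Surjective γEA) (hEB : Function.Surjective γEB)
    (pA : A →* EA) (hpA : γEA.comp pA = γA)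
    (pB : B →* EB) (hpB : γEB.comp pB = γB)
    (f : A →* B) (hf : γB.comp f = γA)
    (Ef : EA →* EB) (hEf : γEB.comp Ef = γEA)
    (hnat : Ef.comp pA = pB.comp f) (hbij : Function.Bijective Ef) (n : ℕ)
    (ΓA : Subgroup A) (ΓB : Subgroup B) [ΓA.Normal] [ΓB.Normal]
    (hΓA : (ΓA : Set A) = {x : A | pA x ∈ ratDer γEA n})
    (hΓB : (ΓB : Set B) = {y : B | pB y ∈ ratDer γEB n})
    (hle : ΓA ≤ ΓB.comap f) :
    Function.Injective (QuotientGroup.map ΓA ΓB f hle) := by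
  rw [← MonoidHom.ker_eq_bot_iff, eq_bot_iff]
  intro x hx
  induction x using QuotientGroup.induction_on with
  | H a =>
    have ha : f a ∈ ΓB := by
      have h1 : QuotientGroup.map ΓA ΓB f hle ((a : A ⧸ ΓA)) = 1 := hx
      rw [QuotientGroup.map_mk, QuotientGroup.eq_one_iff] at h1
      exact h1
    have hB' : pB (f a) ∈ ratDer γEB n := by
      rw [← SetLike.mem_coe, hΓB] at ha; exact ha
    set e := MulEquiv.ofBijective Ef hbij with he
    have hcomm : ∀ x, γEB (e x) = γEA x := fun x => by
      exact DFunLike.congr_fun hEf x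
    have hEfa : Ef (pA a) ∈ ratDer γEB n := by
      have hc := DFunLike.congr_fun hnat a
      simp only [MonoidHom.comp_apply] at hc
      rw [hc]
      exact hB'
    have hpAa : pA a ∈ ratDer γEA n :=
      (ratDer_equiv γEA γEB e hcomm n (pA a)).mp hEfa
    have haA : a ∈ ΓA := by rw [← SetLike.mem_coe, hΓA]; exact hpAa
    simpa [QuotientGroup.eq_one_iff] using haA
end
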